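/- Let (xₙ) ⊂ ℝ² be a sequence, Vₙ := V(xₙ) ∈ ℝ, Bₙ := B(xₙ) > 0, and (pₙ) a sequence of natural numbers with pₙ ≥ 1, and assume Vₙ²/(2 pₙ Bₙ) → 1 as n → ∞. Let φₙ(x) := ((i Bₙ (x₁ − i x₂))^{pₙ} e^{−Bₙ|x|²/4}, −Vₙ (i Bₙ (x₁ − i x₂))^{pₙ−1} e^{−Bₙ|x|²/4})ᵀ, and let ψₙ(x) := e^{i gₙ(x)} χₙ(x) φₙ(x − xₙ) for any real phase function gₙ and cutoff χₙ(x) = χ((x − xₙ)/rₙ) with rₙ > 0, where χ ∈ C₀^∞(ℝ²,[0,1]) equals 1 on {|x| ≤ 1} and 0 on {|x| ≥ 2}. Then for all sufficiently large n: ‖φₙ‖² ≥ 2^{pₙ+1} π Bₙ^{pₙ−1} pₙ!, and ‖ψₙ‖² ≥ (1/4) ‖φₙ‖² (1 − (1/pₙ!) ∫_{Bₙ rₙ²/2}^∞ s^{pₙ} e^{−s} ds). -/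

import Mathlib

open MeasureTheory Filter Topology Complex Asymptotics

noncomputable section

abbrev Plane : Type := EuclideanSpace ℝ (Fin 2)
abbrev Spinor : Type := EuclideanSpace ℂ (Fin 2)
abbrev HS : Type := Lp (α := Plane) Spinor 2 (volume : Measure Plane)
abbrev HS1 : Type := Lp (α := Plane) ℂ 2 (volume : Measure Plane)

/-- The spinor with components `a`, `b`. -/
def spin (a b : ℂ) : Spinor := (WithLp.equiv 2 (Fin 2 → ℂ)).symm ![a, b]

/-- The plane vector with components `a`, `b`. -/
def planeVec (a b : ℝ) : Plane := (WithLp.equiv 2 (Fin 2 → ℝ)).symm ![a, b]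

/-- Partial derivative in direction `j` of a complex-valued function. -/
def pd (j : Fin 2) (f : Plane → ℂ) (x : Plane) : ℂ := fderiv ℝ f x (EuclideanSpace.single j 1)

/-- Partial derivative in direction `j` of a real-valued function. -/
def pdR (j : Fin 2) (f : Plane → ℝ) (x : Plane) : ℝ := fderiv ℝ f x (EuclideanSpace.single j 1)

/-- curl A = ∂₁A₂ − ∂₂A₁. -/
def curl (A : Plane → Plane) (x : Plane) : ℝ :=
  pdR 0 (fun y => A y 1) x - pdR 1 (fun y => A y 0) x

/-- Smooth compactly supported test function. -/
def IsTestFun (u : Plane → ℂ) : Prop := ContDiff ℝ (⊤ : ℕ∞) u ∧ HasCompactSupport u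

/-- The action of `d = (p₁ - A₁) + i (p₂ - A₂)`. -/
def dAct (A : Plane → Plane) (u : Plane → ℂ) (x : Plane) : ℂ :=
  -Complex.I * pd 0 u x + pd 1 u x - (↑(A x 0) + Complex.I * ↑(A x 1)) * u x

/-- The action of `d* = (p₁ - A₁) - i (p₂ - A₂)`. -/
def dStarAct (A : Plane → Plane) (v : Plane → ℂ) (x : Plane) : ℂ :=
  -Complex.I * pd 0 v x - pd 1 v x - (↑(A x 0) - Complex.I * ↑(A x 1)) * v x

/-- The action of the free massless Dirac operator `σ·(−i∇−A)` on a spinor `(u, v)`. -/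
def diracAct (A : Plane → Plane) (u v : Plane → ℂ) (x : Plane) : Spinor :=
  spin (dStarAct A v x) (dAct A u x)

/-- `H` is a self-adjoint operator on `L²(ℝ²,ℂ²)` which acts as `σ·(−i∇−A) + V` on
test functions; since the latter operator is essentially self-adjoint, this characterizes
the self-adjoint closure `H = D_A + V`. -/
def IsDiracExtension (A : Plane → Plane) (V : Plane → ℝ) (H : HS →ₗ.[ℂ] HS) : Prop :=
  IsSelfAdjoint H ∧
  ∀ u v : Plane → ℂ, IsTestFun u → IsTestFun v →
    ∃ ψ : H.domain, (⇑(ψ : HS) =ᵐ[volume] fun x => spin (u x) (v x)) ∧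
      (⇑(H ψ) =ᵐ[volume] fun x => diracAct A u v x + (V x : ℂ) • spin (u x) (v x))

section SpectralDefs

variable {E : Type*} [NormedAddCommGroup E] [InnerProductSpace ℂ E] [CompleteSpace E]

/-- Weyl (singular sequence) criterion for membership in the essential spectrum of a
self-adjoint operator: a normalized weakly null sequence in the domain on which
`T - λ` tends to zero. -/
def InEssSpectrum (T : E →ₗ.[ℂ] E) (lam : ℝ) : Prop :=
  ∃ ψ : ℕ → T.domain,
    (∀ n, ‖(ψ n : E)‖ = 1) ∧
    (∀ φ : E, Tendsto (fun n => (inner ℂ ((ψ n : E)) φ : ℂ)) atTop (𝓝 0)) ∧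
    Tendsto (fun n => ‖T (ψ n) - (lam : ℂ) • ((ψ n : E))‖) atTop (𝓝 0)

/-- `R` is the (bounded, everywhere-defined) inverse of `T - z`. -/
def IsResolventAt (T : E →ₗ.[ℂ] E) (z : ℂ) (R : E →L[ℂ] E) : Prop :=
  (∀ x : E, ∃ hx : R x ∈ T.domain, T ⟨R x, hx⟩ - z • R x = x) ∧
  (∀ y : T.domain, R (T y - z • (y : E)) = (y : E))

/-- `z` belongs to the spectrum of `T`. -/
def InSpectrum (T : E →ₗ.[ℂ] E) (z : ℂ) : Prop := ¬ ∃ R : E →L[ℂ] E, IsResolventAt T z R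

/-- Purely discrete spectrum = empty essential spectrum. -/
def HasDiscreteSpectrum (T : E →ₗ.[ℂ] E) : Prop := ∀ lam : ℝ, ¬ InEssSpectrum T lam

/-- Pure point spectrum: the eigenvectors of `T` span a dense subspace. -/
def HasPurePointSpectrum (T : E →ₗ.[ℂ] E) : Prop :=
  Dense (↑(Submodule.span ℂ
    {x : E | ∃ hx : x ∈ T.domain, ∃ μ : ℝ, T ⟨x, hx⟩ = (μ : ℂ) • x}) : Set E)

end SpectralDefs

/-- `f` varies with rate `ν` at infinity. -/
def VariesWithRate (ν : ℝ) (f : Plane → ℝ) : Prop :=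
  ∃ R > (1:ℝ), ∃ C > (0:ℝ), ∀ α : Plane → Plane,
    (α =o[cocompact Plane] fun x => ‖x‖ ^ ν) →
    ∀ x : Plane, R < ‖x‖ → |f (x + α x)| ≤ C * |f x|

section Stmt12Helpers

open Set

lemma auxGint (p : ℕ) : IntegrableOn (fun s : ℝ => s ^ p * Real.exp (-s)) (Ioi (0:ℝ)) := by
  have h := Real.GammaIntegral_convergent (s := (p:ℝ) + 1) (by positivity)
  simp only [add_sub_cancel_right] at h
  refine h.congr_fun (fun x hx => ?_) measurableSet_Ioi
  dsimp only; rw [Real.rpow_natCast]; ring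

lemma auxGintOn (p : ℕ) {c : ℝ} (hc : 0 ≤ c) :
    IntegrableOn (fun s : ℝ => s ^ p * Real.exp (-s)) (Ioi c) :=
  (auxGint p).mono_set (Ioi_subset_Ioi hc)

lemma auxGval (p : ℕ) : ∫ s in Ioi (0:ℝ), s ^ p * Real.exp (-s) = p.factorial := by
  have h := Real.Gamma_eq_integral (s := (p:ℝ) + 1) (by positivity)
  rw [Real.Gamma_nat_eq_factorial] at h
  rw [h]
  refine setIntegral_congr_fun measurableSet_Ioi (fun x hx => ?_)
  simp only [add_sub_cancel_right, Real.rpow_natCast]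
  ring

lemma auxGrec (p : ℕ) {a : ℝ} (ha : 0 ≤ a) :
    ∫ s in Ioi a, s ^ (p+1) * Real.exp (-s) =
      a ^ (p+1) * Real.exp (-a) + (p+1) * ∫ s in Ioi a, s ^ p * Real.exp (-s) := by
  have hderiv : ∀ x ∈ Ioi a, HasDerivAt (fun s : ℝ => s ^ (p+1) * Real.exp (-s))
      (((p:ℝ)+1) * (x ^ p * Real.exp (-x)) - x ^ (p+1) * Real.exp (-x)) x := by
    intro x _
    have h1 := (hasDerivAt_pow (p+1) x).mul ((Real.hasDerivAt_exp (-x)).comp x (hasDerivAt_neg x))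
    refine h1.congr_deriv ?_
    simp [Function.comp]
    ring
  have h1 : IntegrableOn (fun x : ℝ => ((p:ℝ)+1) * (x ^ p * Real.exp (-x))) (Ioi a) :=
    (auxGintOn p ha).const_mul _
  have hint : IntegrableOn
      (fun x : ℝ => ((p:ℝ)+1) * (x ^ p * Real.exp (-x)) - x ^ (p+1) * Real.exp (-x)) (Ioi a) :=
    h1.sub (auxGintOn (p+1) ha)
  have htend : Tendsto (fun s : ℝ => s ^ (p+1) * Real.exp (-s)) atTop (𝓝 0) :=
    Real.tendsto_pow_mul_exp_neg_atTop_nhds_zero (p+1)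
  have hcont : ContinuousWithinAt (fun s : ℝ => s ^ (p+1) * Real.exp (-s)) (Ici a) a :=
    (Continuous.continuousWithinAt (by continuity))
  have key := MeasureTheory.integral_Ioi_of_hasDerivAt_of_tendsto hcont hderiv hint htend
  rw [MeasureTheory.integral_sub h1 (auxGintOn (p+1) ha), MeasureTheory.integral_const_mul] at key
  linarith [key]

lemma auxGmono (p : ℕ) {a : ℝ} (ha : 0 ≤ a) :
    ((p:ℝ)+1) * ∫ s in Ioi a, s ^ p * Real.exp (-s) ≤
      ∫ s in Ioi a, s ^ (p+1) * Real.exp (-s) := by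
  rw [auxGrec p ha]
  have : 0 ≤ a ^ (p+1) * Real.exp (-a) := by positivity
  linarith

lemma auxGle (p : ℕ) {a : ℝ} (ha : 0 ≤ a) :
    ∫ s in Ioi a, s ^ p * Real.exp (-s) ≤ p.factorial := by
  rw [← auxGval p]
  refine setIntegral_mono_set (auxGint p) ?_ ?_
  · filter_upwards [self_mem_ae_restrict measurableSet_Ioi] with x hx
    exact mul_nonneg (pow_nonneg (mem_Ioi.mp hx).le _) (Real.exp_pos _).le
  · exact HasSubset.Subset.eventuallyLE (Ioi_subset_Ioi ha)

lemma auxGnonneg (p : ℕ) {a : ℝ} (ha : 0 ≤ a) : 0 ≤ ∫ s in Ioi a, s ^ p * Real.exp (-s) :=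
  setIntegral_nonneg measurableSet_Ioi
    (fun x hx => mul_nonneg (pow_nonneg (ha.trans (mem_Ioi.mp hx).le) _) (Real.exp_pos _).le)

lemma auxSubst (m : ℕ) {b c : ℝ} (hb : 0 < b) (hc : 0 ≤ c) :
    ∫ s in Ioi (b * c ^ 2 / 2), s ^ m * Real.exp (-s) =
      ∫ y in Ioi c, (b * y) * ((b * y ^ 2 / 2) ^ m * Real.exp (-(b * y ^ 2 / 2))) := by
  have himg : (fun y : ℝ => b * y ^ 2 / 2) '' Ioi c = Ioi (b * c ^ 2 / 2) := by
    ext z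
    simp only [mem_image, mem_Ioi]
    constructor
    · rintro ⟨y, hy, rfl⟩
      have : c ^ 2 < y ^ 2 := by nlinarith
      nlinarith
    · intro hz
      have hz0 : 0 ≤ z := le_of_lt (lt_of_le_of_lt (by positivity) hz)
      refine ⟨Real.sqrt (2 * z / b), ?_, ?_⟩
      · rw [show c = Real.sqrt (c ^ 2) by rw [Real.sqrt_sq hc]]
        apply Real.sqrt_lt_sqrt (by positivity)
        rw [lt_div_iff₀ hb]; nlinarith
      · rw [Real.sq_sqrt (by positivity : 0 ≤ 2 * z / b)]
        field_simp
  have hderiv : ∀ y ∈ Ioi c, HasDerivWithinAt (fun y : ℝ => b * y ^ 2 / 2) (b * y) (Ioi c) y := by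
    intro y _
    have := ((hasDerivAt_pow 2 y).const_mul b).div_const 2
    simpa using (this.hasDerivWithinAt.congr_deriv (by ring))
  have hinj : InjOn (fun y : ℝ => b * y ^ 2 / 2) (Ioi c) := by
    intro y1 h1 y2 h2 h
    simp only [mem_Ioi] at h1 h2
    simp only at h
    have e : y1 ^ 2 = y2 ^ 2 := mul_left_cancel₀ hb.ne' (by linarith)
    nlinarith
  rw [← himg, integral_image_eq_integral_abs_deriv_smul measurableSet_Ioi hderiv hinj]
  refine setIntegral_congr_fun measurableSet_Ioi (fun y hy => ?_)
  have hy0 : 0 < y := lt_of_le_of_lt hc (mem_Ioi.mp hy)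
  rw [abs_of_pos (by positivity)]
  simp [smul_eq_mul]

lemma auxVball : (volume (Metric.ball (0:Plane) 1)).toReal = Real.pi := by
  rw [EuclideanSpace.volume_ball]
  simp only [Fintype.card_fin]
  norm_num [Real.Gamma_two, Real.sq_sqrt Real.pi_nonneg, Real.pi_nonneg]

lemma auxPolar (f : ℝ → ℝ) :
    ∫ x : Plane, f ‖x‖ = 2 * Real.pi * ∫ y in Ioi (0:ℝ), y * f y := by
  have h := MeasureTheory.integral_fun_norm_addHaar (volume : Measure Plane) f
  have hdim : Module.finrank ℝ Plane = 2 := finrank_euclideanSpace_fin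
  rw [hdim] at h
  norm_num only at h
  rw [h, measureReal_def, auxVball]
  simp only [smul_eq_mul, nsmul_eq_mul, Nat.cast_ofNat, pow_one]
  ring

lemma auxCore (m : ℕ) {b c : ℝ} (hb : 0 < b) (hc : 0 ≤ c) :
    ∫ y in Ioi c, y * ((b ^ 2 * y ^ 2) ^ m * Real.exp (-(b / 2) * y ^ 2)) =
      (2 ^ m * b ^ m / b) * ∫ s in Ioi (b * c ^ 2 / 2), s ^ m * Real.exp (-s) := by
  rw [auxSubst m hb hc, ← MeasureTheory.integral_const_mul]
  refine setIntegral_congr_fun measurableSet_Ioi (fun y _ => ?_)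
  rw [show -(b / 2) * y ^ 2 = -(b * y ^ 2 / 2) by ring]
  rw [div_pow]
  field_simp
  ring

lemma auxRadialFull (m : ℕ) {b : ℝ} (hb : 0 < b) :
    ∫ x : Plane, (b ^ 2 * ‖x‖ ^ 2) ^ m * Real.exp (-(b / 2) * ‖x‖ ^ 2) =
      (2 ^ (m + 1) * Real.pi * b ^ m / b) * ∫ s in Ioi (0:ℝ), s ^ m * Real.exp (-s) := by
  rw [auxPolar (fun t => (b ^ 2 * t ^ 2) ^ m * Real.exp (-(b / 2) * t ^ 2)),
    auxCore m hb le_rfl]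
  norm_num
  ring

lemma auxRadialTail (m : ℕ) {b c : ℝ} (hb : 0 < b) (hc : 0 ≤ c) :
    ∫ x : Plane, Set.indicator (Ioi c)
        (fun t => (b ^ 2 * t ^ 2) ^ m * Real.exp (-(b / 2) * t ^ 2)) ‖x‖ =
      (2 ^ (m + 1) * Real.pi * b ^ m / b) *
        ∫ s in Ioi (b * c ^ 2 / 2), s ^ m * Real.exp (-s) := by
  rw [auxPolar]
  have h1 : ∀ y : ℝ, y * Set.indicator (Ioi c)
      (fun t => (b ^ 2 * t ^ 2) ^ m * Real.exp (-(b / 2) * t ^ 2)) y =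
      Set.indicator (Ioi c)
        (fun t => t * ((b ^ 2 * t ^ 2) ^ m * Real.exp (-(b / 2) * t ^ 2))) y := by
    intro y
    by_cases hy : y ∈ Ioi c <;> simp [hy]
  simp only [h1]
  rw [MeasureTheory.setIntegral_indicator measurableSet_Ioi, Ioi_inter_Ioi, max_eq_right hc,
    auxCore m hb hc]
  ring

lemma auxGaussInt {β : ℝ} (hβ : 0 < β) :
    Integrable (fun x : Plane => Real.exp (-(β * ‖x‖ ^ 2))) := by
  have h := GaussianFourier.integrable_cexp_neg_mul_sq_norm_add_of_euclideanSpace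
    (ι := Fin 2) (b := (β : ℂ)) (by simpa using hβ) 0 0
  have h2 := h.norm
  refine h2.congr (Filter.Eventually.of_forall (fun x => ?_))
  simp [Complex.norm_exp]
  left
  norm_cast

lemma auxPolyGaussInt (k : ℕ) {β : ℝ} (hβ : 0 < β) :
    Integrable (fun x : Plane => ‖x‖ ^ k * Real.exp (-(β * ‖x‖ ^ 2))) := by
  have hbound : ∀ x : Plane, ‖x‖ ^ k * Real.exp (-(β * ‖x‖ ^ 2)) ≤
      (k.factorial * Real.exp (1 / (2 * β))) * Real.exp (-(β / 2 * ‖x‖ ^ 2)) := by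
    intro x
    set t := ‖x‖ with ht
    have ht0 : 0 ≤ t := norm_nonneg x
    have h1 : t ^ k ≤ k.factorial * Real.exp t := by
      have := Real.pow_div_factorial_le_exp t ht0 k
      rw [div_le_iff₀ (by positivity)] at this
      linarith [this]
    have h2 : t - β / 2 * t ^ 2 ≤ 1 / (2 * β) := by
      rw [le_div_iff₀ (by positivity)]
      nlinarith [sq_nonneg (β * t - 1)]
    calc t ^ k * Real.exp (-(β * t ^ 2))
        ≤ (k.factorial * Real.exp t) * Real.exp (-(β * t ^ 2)) := by
          apply mul_le_mul_of_nonneg_right h1 (Real.exp_pos _).le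
      _ = k.factorial * Real.exp (t - β / 2 * t ^ 2) * Real.exp (-(β / 2 * t ^ 2)) := by
          rw [mul_assoc, mul_assoc, ← Real.exp_add, ← Real.exp_add]; ring_nf
      _ ≤ (k.factorial * Real.exp (1 / (2 * β))) * Real.exp (-(β / 2 * t ^ 2)) := by
          have := Real.exp_le_exp.mpr h2
          have hk : (0:ℝ) ≤ k.factorial := Nat.cast_nonneg _
          nlinarith [Real.exp_pos (-(β / 2 * t ^ 2)), Real.exp_pos (1 / (2*β)),
            mul_le_mul_of_nonneg_left this hk]
  have hint : Integrable (fun x : Plane =>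
      (k.factorial * Real.exp (1 / (2 * β))) * Real.exp (-(β / 2 * ‖x‖ ^ 2))) :=
    (auxGaussInt (by positivity)).const_mul _
  refine hint.mono ?_ (Filter.Eventually.of_forall (fun x => ?_))
  · apply Continuous.aestronglyMeasurable
    fun_prop
  · rw [Real.norm_eq_abs, Real.norm_eq_abs, _root_.abs_of_nonneg (by positivity),
      _root_.abs_of_nonneg (by positivity)]
    exact hbound x

lemma auxRadialInt (m : ℕ) {b : ℝ} (hb : 0 < b) :
    Integrable (fun x : Plane => (b ^ 2 * ‖x‖ ^ 2) ^ m * Real.exp (-(b / 2) * ‖x‖ ^ 2)) := by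
  have h := (auxPolyGaussInt (2*m) (half_pos hb)).const_mul (b ^ (2*m))
  refine h.congr (Filter.Eventually.of_forall (fun x => ?_))
  dsimp only
  rw [show -(b / 2 * ‖x‖ ^ 2) = -(b / 2) * ‖x‖ ^ 2 by ring, mul_pow, ← pow_mul, ← pow_mul]
  ring

lemma auxNormSqEq (x : Plane) : ‖x‖ ^ 2 = (x 0) ^ 2 + (x 1) ^ 2 := by
  have h : ‖x‖ = Real.sqrt ((x 0) ^ 2 + (x 1) ^ 2) := by
    simp [EuclideanSpace.norm_eq, Fin.sum_univ_two, sq_abs]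
  rw [h, Real.sq_sqrt (by positivity)]

lemma auxSpinNormSq (a b : ℂ) : ‖spin a b‖ ^ 2 = ‖a‖ ^ 2 + ‖b‖ ^ 2 := by
  have h : ‖spin a b‖ = Real.sqrt (‖a‖ ^ 2 + ‖b‖ ^ 2) := by
    simp [spin, EuclideanSpace.norm_eq, Fin.sum_univ_two]
  rw [h, Real.sq_sqrt (by positivity)]

lemma auxPhiNormSq (q : ℕ) {b : ℝ} (v : ℝ) (x : Plane) :
    ‖spin ((Complex.I * (b : ℂ) * ((x 0 : ℂ) - Complex.I * (x 1 : ℂ))) ^ q *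
        (Real.exp (-(b * ‖x‖ ^ 2) / 4) : ℂ))
      (-(v : ℂ) * (Complex.I * (b : ℂ) * ((x 0 : ℂ) - Complex.I * (x 1 : ℂ))) ^ (q - 1) *
        (Real.exp (-(b * ‖x‖ ^ 2) / 4) : ℂ))‖ ^ 2 =
    (b ^ 2 * ‖x‖ ^ 2) ^ q * Real.exp (-(b / 2) * ‖x‖ ^ 2) +
      v ^ 2 * ((b ^ 2 * ‖x‖ ^ 2) ^ (q - 1) * Real.exp (-(b / 2) * ‖x‖ ^ 2)) := by
  rw [auxSpinNormSq, Complex.sq_norm, Complex.sq_norm]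
  have hz : Complex.normSq (Complex.I * (b : ℂ) * ((x 0 : ℂ) - Complex.I * (x 1 : ℂ))) =
      b ^ 2 * ‖x‖ ^ 2 := by
    simp [Complex.normSq_apply, auxNormSqEq x]
    ring
  have he : Complex.normSq ((Real.exp (-(b * ‖x‖ ^ 2) / 4) : ℝ) : ℂ) =
      Real.exp (-(b / 2) * ‖x‖ ^ 2) := by
    rw [Complex.normSq_ofReal, ← Real.exp_add]
    ring_nf
  simp only [map_mul, map_pow, hz, he, Complex.normSq_neg, Complex.normSq_ofReal]
  ring

end Stmt12Helpers

set_option maxHeartbeats 1000000 in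
/-- **Lemma (norms of the localized Landau-type trial functions).** -/
theorem stmt12
    (V B : ℕ → ℝ) (xc : ℕ → Plane) (p : ℕ → ℕ) (r : ℕ → ℝ) (g : ℕ → Plane → ℝ)
    (χ : Plane → ℝ)
    (hB : ∀ n, 0 < B n) (hp : ∀ n, 1 ≤ p n) (hr : ∀ n, 0 < r n)
    (hχsmooth : ContDiff ℝ (⊤ : ℕ∞) χ) (hχsupp : HasCompactSupport χ)
    (hχrange : ∀ x, χ x ∈ Set.Icc (0:ℝ) 1)
    (hχone : ∀ x : Plane, ‖x‖ ≤ 1 → χ x = 1)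
    (hχzero : ∀ x : Plane, 2 ≤ ‖x‖ → χ x = 0)
    (hlim : Tendsto (fun n => V n ^ 2 / (2 * p n * B n)) atTop (𝓝 1))
    (φn : ℕ → Plane → Spinor)
    (hφn : ∀ n x, φn n x = spin
        ((Complex.I * (B n : ℂ) * ((x 0 : ℂ) - Complex.I * (x 1 : ℂ))) ^ (p n) *
          (Real.exp (-(B n * ‖x‖ ^ 2) / 4) : ℂ))
        (-(V n : ℂ) *
          (Complex.I * (B n : ℂ) * ((x 0 : ℂ) - Complex.I * (x 1 : ℂ))) ^ (p n - 1) *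
          (Real.exp (-(B n * ‖x‖ ^ 2) / 4) : ℂ)))
    (ψn : ℕ → Plane → Spinor)
    (hψn : ∀ n x, ψn n x = Complex.exp (Complex.I * (g n x : ℂ)) •
        ((χ ((r n)⁻¹ • (x - xc n)) : ℝ) • φn n (x - xc n))) :
    ∀ᶠ n in atTop,
      (2 ^ (p n + 1) * Real.pi * B n ^ (p n - 1) * (Nat.factorial (p n) : ℝ) ≤
        ∫ x : Plane, ‖φn n x‖ ^ 2) ∧
      ((1/4) * (∫ x : Plane, ‖φn n x‖ ^ 2) *
          (1 - (1 / (Nat.factorial (p n) : ℝ)) *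
            ∫ s in Set.Ioi (B n * r n ^ 2 / 2), s ^ (p n) * Real.exp (-s))
        ≤ ∫ x : Plane, ‖ψn n x‖ ^ 2) := by
  refine Filter.Eventually.of_forall (fun n => ?_)
  have hb := hB n
  have hq := hp n
  have hrr := hr n
  set F1 : Plane → ℝ :=
    fun x => (B n ^ 2 * ‖x‖ ^ 2) ^ p n * Real.exp (-(B n / 2) * ‖x‖ ^ 2) with hF1
  set F2 : Plane → ℝ :=
    fun x => V n ^ 2 * ((B n ^ 2 * ‖x‖ ^ 2) ^ (p n - 1) * Real.exp (-(B n / 2) * ‖x‖ ^ 2))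
    with hF2
  have hpt : ∀ x : Plane, ‖φn n x‖ ^ 2 = F1 x + F2 x := by
    intro x
    rw [hφn n x]
    exact auxPhiNormSq (p n) (V n) x
  have hint₁ : Integrable F1 := auxRadialInt (p n) hb
  have hint₂ : Integrable F2 := (auxRadialInt (p n - 1) hb).const_mul _
  have hK : ∫ x : Plane, ‖φn n x‖ ^ 2 = (∫ x : Plane, F1 x) + ∫ x : Plane, F2 x := by
    rw [← integral_add hint₁ hint₂]
    exact integral_congr_ae (Filter.Eventually.of_forall hpt)
  have hfacq : (0:ℝ) < (p n).factorial := by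
    exact_mod_cast Nat.factorial_pos (p n)
  have hfacq' : (0:ℝ) < (p n - 1).factorial := by
    exact_mod_cast Nat.factorial_pos (p n - 1)
  have hI₁ : ∫ x : Plane, F1 x =
      (2 ^ (p n + 1) * Real.pi * B n ^ p n / B n) * (p n).factorial := by
    rw [hF1, auxRadialFull (p n) hb, auxGval (p n)]
  have hI₂ : ∫ x : Plane, F2 x = V n ^ 2 *
      ((2 ^ (p n - 1 + 1) * Real.pi * B n ^ (p n - 1) / B n) * (p n - 1).factorial) := by
    rw [hF2, MeasureTheory.integral_const_mul, auxRadialFull (p n - 1) hb, auxGval (p n - 1)]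
  have hE2 : 0 ≤ ∫ x : Plane, F2 x := integral_nonneg (fun x => by positivity)
  have hE1 : 0 ≤ ∫ x : Plane, F1 x := integral_nonneg (fun x => by positivity)
  have hbpow : B n ^ p n / B n = B n ^ (p n - 1) := by
    rw [div_eq_iff hb.ne', ← pow_succ, Nat.sub_add_cancel hq]
  constructor
  · rw [hK]
    have hv : 2 ^ (p n + 1) * Real.pi * B n ^ (p n - 1) * (p n).factorial
        = ∫ x : Plane, F1 x := by
      rw [hI₁, ← hbpow]; ring
    linarith
  · -- second inequality
    have ha : (0:ℝ) ≤ B n * r n ^ 2 / 2 := by positivity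
    set G : ℝ := ∫ s in Set.Ioi (B n * r n ^ 2 / 2), s ^ p n * Real.exp (-s) with hGdef
    set G' : ℝ := ∫ s in Set.Ioi (B n * r n ^ 2 / 2), s ^ (p n - 1) * Real.exp (-s) with hG'def
    have hGnn : 0 ≤ G := auxGnonneg (p n) ha
    have hG'nn : 0 ≤ G' := auxGnonneg (p n - 1) ha
    have hGle : G ≤ (p n).factorial := auxGle (p n) ha
    have hGmono : (p n : ℝ) * G' ≤ G := by
      have h := auxGmono (p n - 1) ha
      rw [Nat.sub_add_cancel hq] at h
      have hcast : ((p n - 1 : ℕ) : ℝ) + 1 = (p n : ℝ) := by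
        rw [Nat.cast_sub hq]; push_cast; ring
      rw [hcast] at h
      exact h
    -- tail integrals
    set T : Set Plane := (Metric.closedBall (0:Plane) (r n))ᶜ with hTdef
    have hTmeas : MeasurableSet T := measurableSet_closedBall.compl
    have hmemT : ∀ x : Plane, x ∈ T ↔ r n < ‖x‖ := by
      intro x
      simp [hTdef, Metric.mem_closedBall, dist_zero_right, not_le]
    have hT1 : ∫ x in T, F1 x = (2 ^ (p n + 1) * Real.pi * B n ^ p n / B n) * G := by
      rw [← MeasureTheory.integral_indicator hTmeas]
      have heq : (Set.indicator T F1) = fun x : Plane => Set.indicator (Set.Ioi (r n))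
          (fun t => (B n ^ 2 * t ^ 2) ^ p n * Real.exp (-(B n / 2) * t ^ 2)) ‖x‖ := by
        funext x
        by_cases hx : r n < ‖x‖
        · rw [Set.indicator_of_mem ((hmemT x).mpr hx), Set.indicator_of_mem (Set.mem_Ioi.mpr hx)]
        · rw [Set.indicator_of_notMem (fun hc => hx ((hmemT x).mp hc)),
            Set.indicator_of_notMem (fun hc => hx (Set.mem_Ioi.mp hc))]
      rw [heq, auxRadialTail (p n) hb hrr.le]
    have hT2 : ∫ x in T, F2 x = V n ^ 2 *
        ((2 ^ (p n - 1 + 1) * Real.pi * B n ^ (p n - 1) / B n) * G') := by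
      rw [← MeasureTheory.integral_indicator hTmeas]
      have heq : (Set.indicator T F2) = fun x : Plane => V n ^ 2 * Set.indicator (Set.Ioi (r n))
          (fun t => (B n ^ 2 * t ^ 2) ^ (p n - 1) * Real.exp (-(B n / 2) * t ^ 2)) ‖x‖ := by
        funext x
        by_cases hx : r n < ‖x‖
        · rw [Set.indicator_of_mem ((hmemT x).mpr hx), Set.indicator_of_mem (Set.mem_Ioi.mpr hx)]
        · rw [Set.indicator_of_notMem (fun hc => hx ((hmemT x).mp hc)),
            Set.indicator_of_notMem (fun hc => hx (Set.mem_Ioi.mp hc)), mul_zero]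
      rw [heq, MeasureTheory.integral_const_mul, auxRadialTail (p n - 1) hb hrr.le]
    -- the ψ side
    set W : Plane → ℝ :=
      fun x => (χ ((r n)⁻¹ • (x - xc n))) ^ 2 * (F1 (x - xc n) + F2 (x - xc n)) with hW
    have hψpt : ∀ x : Plane, ‖ψn n x‖ ^ 2 = W x := by
      intro x
      rw [hψn n x, norm_smul, norm_smul]
      have h1 : ‖Complex.exp (Complex.I * (g n x : ℂ))‖ = 1 := by
        simp [Complex.norm_exp]
      rw [h1, one_mul, mul_pow, Real.norm_eq_abs, _root_.sq_abs, hpt (x - xc n)]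
    have hSnn : ∀ y : Plane, 0 ≤ F1 y + F2 y := fun y => by positivity
    have hχc : Continuous χ := hχsmooth.continuous
    have hWcont : Continuous W := by
      apply Continuous.mul
      · fun_prop
      · fun_prop
    have hbig : Integrable (fun x : Plane => F1 (x - xc n) + F2 (x - xc n)) :=
      (hint₁.add hint₂).comp_sub_right (xc n)
    have hWint : Integrable W := by
      refine hbig.mono hWcont.aestronglyMeasurable
        (Filter.Eventually.of_forall (fun x => ?_))
      rw [Real.norm_eq_abs, Real.norm_eq_abs, _root_.abs_of_nonneg (hSnn _),
        _root_.abs_of_nonneg (mul_nonneg (sq_nonneg _) (hSnn _))]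
      have hchi : (χ ((r n)⁻¹ • (x - xc n))) ^ 2 ≤ 1 := by
        have h0 := (hχrange ((r n)⁻¹ • (x - xc n))).1
        have h1 := (hχrange ((r n)⁻¹ • (x - xc n))).2
        nlinarith
      exact mul_le_of_le_one_left (hSnn _) hchi
    have hψeq : ∫ x : Plane, ‖ψn n x‖ ^ 2 = ∫ x : Plane, W x :=
      integral_congr_ae (Filter.Eventually.of_forall hψpt)
    have hstep1 : ∫ x in Metric.closedBall (xc n) (r n), W x ≤ ∫ x : Plane, W x :=
      setIntegral_le_integral hWint
        (Filter.Eventually.of_forall (fun x => mul_nonneg (sq_nonneg _) (hSnn _)))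
    have hstep2 : ∫ x in Metric.closedBall (xc n) (r n), W x =
        ∫ x in Metric.closedBall (xc n) (r n), (F1 (x - xc n) + F2 (x - xc n)) := by
      refine setIntegral_congr_fun measurableSet_closedBall (fun x hx => ?_)
      have hnorm : ‖(r n)⁻¹ • (x - xc n)‖ ≤ 1 := by
        rw [norm_smul, Real.norm_eq_abs, _root_.abs_of_nonneg (inv_nonneg.mpr hrr.le)]
        have hd : ‖x - xc n‖ ≤ r n := by
          rw [← dist_eq_norm]; exact Metric.mem_closedBall.mp hx
        calc (r n)⁻¹ * ‖x - xc n‖ ≤ (r n)⁻¹ * r n := by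
              exact mul_le_mul_of_nonneg_left hd (inv_nonneg.mpr hrr.le)
          _ = 1 := inv_mul_cancel₀ hrr.ne'
      rw [hW]
      dsimp only
      rw [hχone _ hnorm, one_pow, one_mul]
    have hstep3 : ∫ x in Metric.closedBall (xc n) (r n), (F1 (x - xc n) + F2 (x - xc n)) =
        ∫ y in Metric.closedBall (0:Plane) (r n), (F1 y + F2 y) := by
      rw [← MeasureTheory.integral_indicator measurableSet_closedBall,
        ← MeasureTheory.integral_indicator measurableSet_closedBall]
      rw [← integral_sub_right_eq_self
        (Set.indicator (Metric.closedBall (0:Plane) (r n)) (fun y => F1 y + F2 y)) (xc n)]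
      congr 1
      funext x
      by_cases hx : x ∈ Metric.closedBall (xc n) (r n)
      · have hx' : x - xc n ∈ Metric.closedBall (0:Plane) (r n) := by
          simpa [Metric.mem_closedBall, dist_eq_norm] using hx
        rw [Set.indicator_of_mem hx, Set.indicator_of_mem hx']
      · have hx' : x - xc n ∉ Metric.closedBall (0:Plane) (r n) := by
          intro hc
          exact hx (by simpa [Metric.mem_closedBall, dist_eq_norm] using hc)
        rw [Set.indicator_of_notMem hx, Set.indicator_of_notMem hx']
    have hsplit : (∫ x in Metric.closedBall (0:Plane) (r n), (F1 x + F2 x)) +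
        ∫ x in T, (F1 x + F2 x) = (∫ x : Plane, F1 x) + ∫ x : Plane, F2 x := by
      rw [← integral_add hint₁ hint₂]
      exact MeasureTheory.integral_add_compl measurableSet_closedBall (hint₁.add hint₂)
    have hTsplit : ∫ x in T, (F1 x + F2 x) = (∫ x in T, F1 x) + ∫ x in T, F2 x :=
      integral_add hint₁.integrableOn hint₂.integrableOn
    -- final arithmetic
    rw [hψeq, hK]
    have htail : (∫ x in T, F1 x) + ∫ x in T, F2 x ≤
        ((∫ x : Plane, F1 x) + ∫ x : Plane, F2 x) * ((1 / (p n).factorial) * G) := by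
      have hfac : ((p n).factorial : ℝ) = (p n : ℝ) * ((p n - 1).factorial : ℝ) := by
        exact_mod_cast (Nat.mul_factorial_pred (Nat.pos_iff_ne_zero.mp (Nat.lt_of_lt_of_le Nat.zero_lt_one hq))).symm
      have h1 : ∫ x in T, F1 x = (∫ x : Plane, F1 x) * ((1 / (p n).factorial) * G) := by
        rw [hT1, hI₁]
        field_simp
      have hC2 : (0:ℝ) ≤ 2 ^ (p n - 1 + 1) * Real.pi * B n ^ (p n - 1) / B n := by
        positivity
      have h2 : ∫ x in T, F2 x ≤ (∫ x : Plane, F2 x) * ((1 / (p n).factorial) * G) := by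
        rw [hT2, hI₂]
        have hGG : ((p n - 1).factorial : ℝ) * G' * (p n : ℝ) ≤
            ((p n - 1).factorial : ℝ) * G := by
          calc ((p n - 1).factorial : ℝ) * G' * (p n : ℝ)
              = ((p n - 1).factorial : ℝ) * ((p n : ℝ) * G') := by ring
            _ ≤ ((p n - 1).factorial : ℝ) * G :=
                mul_le_mul_of_nonneg_left hGmono hfacq'.le
        have hv2 : (0:ℝ) ≤ V n ^ 2 := sq_nonneg _
        calc V n ^ 2 * ((2 ^ (p n - 1 + 1) * Real.pi * B n ^ (p n - 1) / B n) * G')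
            = (V n ^ 2 * (2 ^ (p n - 1 + 1) * Real.pi * B n ^ (p n - 1) / B n)) * G' := by
              ring
          _ ≤ (V n ^ 2 * (2 ^ (p n - 1 + 1) * Real.pi * B n ^ (p n - 1) / B n)) *
                (G / (p n : ℝ) * 1) := by
              refine mul_le_mul_of_nonneg_left ?_ (mul_nonneg hv2 hC2)
              rw [mul_one, le_div_iff₀ (by exact_mod_cast Nat.lt_of_lt_of_le Nat.zero_lt_one hq)]
              linarith [hGmono]
          _ = V n ^ 2 * ((2 ^ (p n - 1 + 1) * Real.pi * B n ^ (p n - 1) / B n) *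
                (p n - 1).factorial) * (1 / (p n).factorial * G) := by
              rw [hfac]
              field_simp
      linarith [h1, h2]
    have h1mQ : 0 ≤ 1 - (1 / (p n).factorial) * G := by
      have h : 1 / ((p n).factorial : ℝ) * G ≤ 1 := by
        rw [div_mul_eq_mul_div, one_mul, div_le_one hfacq]
        exact hGle
      linarith
    have hKnn : 0 ≤ (∫ x : Plane, F1 x) + ∫ x : Plane, F2 x := by linarith
    have hmain : ((∫ x : Plane, F1 x) + ∫ x : Plane, F2 x) *
        (1 - (1 / (p n).factorial) * G) ≤ ∫ x : Plane, W x := by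
      have hh : ((∫ x : Plane, F1 x) + ∫ x : Plane, F2 x) * (1 - (1 / (p n).factorial) * G)
          ≤ ∫ x in Metric.closedBall (0:Plane) (r n), (F1 x + F2 x) := by
        have hexp : ((∫ x : Plane, F1 x) + ∫ x : Plane, F2 x) * (1 - (1 / (p n).factorial) * G)
            = ((∫ x : Plane, F1 x) + ∫ x : Plane, F2 x) -
              ((∫ x : Plane, F1 x) + ∫ x : Plane, F2 x) * ((1 / (p n).factorial) * G) := by
          ring
        rw [hexp]
        linarith [htail, hsplit, hTsplit]
      calc ((∫ x : Plane, F1 x) + ∫ x : Plane, F2 x) * (1 - (1 / (p n).factorial) * G)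
          ≤ ∫ x in Metric.closedBall (0:Plane) (r n), (F1 x + F2 x) := hh
        _ = ∫ x in Metric.closedBall (xc n) (r n), W x := by rw [hstep2, hstep3]
        _ ≤ ∫ x : Plane, W x := hstep1
    calc 1 / 4 * ((∫ x : Plane, F1 x) + ∫ x : Plane, F2 x) * (1 - (1 / (p n).factorial) * G)
        = 1 / 4 * (((∫ x : Plane, F1 x) + ∫ x : Plane, F2 x) *
            (1 - (1 / (p n).factorial) * G)) := by ring
      _ ≤ ((∫ x : Plane, F1 x) + ∫ x : Plane, F2 x) * (1 - (1 / (p n).factorial) * G) := by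
          linarith [mul_nonneg hKnn h1mQ]
      _ ≤ ∫ x : Plane, W x := hmain

end
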